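/- Let K ⊆ ℝ^d be a convex set containing the unit Euclidean ball, let T ≥ 1 and C > 0. Consider any deterministic player strategy for bandit optimization over T rounds, specified by maps p_t : ℝ^{t−1} → K selecting the action x_t from the previously observed loss values; given loss functions f_1,…,f_T : K → ℝ, define recursively x_t := p_t( f_1(x_1), …, f_{t−1}(x_{t−1}) ). Then there exists a C-approximately linear sequence f_1, …, f_T of loss functions on K (in fact one can take all f_t equal to a single ε-approximately linear function with ε = C/T) such that Σ_{t=1}^{T} f_t(x_t) − min_{x∈K} Σ_{t=1}^{T} f_t(x) ≥ 2C, where the minimum is attained. -/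

import Mathlib

/-!
The player is deterministic, so against a loss that takes the same value `ε = C / T` at every
point it plays, it follows the fixed path `y_t = p_t(ε, …, ε)`. Since `K` is infinite, some
`x ∈ K` is off this path; the loss equal to `-ε` at `x` and to `ε` elsewhere is within `ε` of
the zero linear function, costs the player `T ε = C` and costs `x` only `-C`.
-/

open Matrix Finset

theorem trajectory_eq_of_feedback_eq {α : Type*} (T : ℕ) (p : ℕ → (ℕ → ℝ) → α)
    (hp_dep : ∀ t v w, (∀ τ, 1 ≤ τ → τ < t → v τ = w τ) → p t v = p t w)
    (X : (ℕ → α → ℝ) → ℕ → α) (hX : ∀ F t, X F t = p t fun τ => F τ (X F τ))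
    (F : ℕ → α → ℝ) (v : ℕ → ℝ) (hF : ∀ τ ∈ Icc 1 T, F τ (p τ v) = v τ) :
    ∀ t ≤ T, X F t = p t v := by
  intro t
  induction t using Nat.strong_induction_on with
  | _ t ih =>
    intro ht
    rw [hX]
    refine hp_dep t _ v fun τ hτ₁ hτt => ?_
    have hτT : τ ≤ T := hτt.le.trans ht
    rw [ih τ hτt hτT, hF τ (mem_Icc.mpr ⟨hτ₁, hτT⟩)]

theorem Set.infinite_of_forall_sum_sq_le_one_mem {d : ℕ} (hd : 1 ≤ d) {K : Set (Fin d → ℝ)}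
    (hK : ∀ z : Fin d → ℝ, ∑ i, z i ^ 2 ≤ 1 → z ∈ K) : K.Infinite := by
  let i₀ : Fin d := ⟨0, hd⟩
  refine ((Set.Icc_infinite (zero_lt_one' ℝ)).image
    (Pi.single_injective i₀).injOn).mono ?_
  rintro _ ⟨c, ⟨hc₀, hc₁⟩, rfl⟩
  apply hK
  have hsum : ∑ i, (Pi.single i₀ c : Fin d → ℝ) i ^ 2 = c ^ 2 := by
    simp [Pi.single_apply, apply_ite (· ^ 2)]
  rw [hsum]
  nlinarith

section SpikeLoss

variable {α : Type*} [DecidableEq α] (x : α) (ε : ℝ)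

def spikeLoss (z : α) : ℝ := if z = x then -ε else ε

@[simp]
theorem spikeLoss_self : spikeLoss x ε x = -ε := if_pos rfl

theorem spikeLoss_of_ne {z : α} (hz : z ≠ x) : spikeLoss x ε z = ε := if_neg hz

variable {ε}

theorem abs_spikeLoss (hε : 0 ≤ ε) (z : α) : |spikeLoss x ε z| = ε := by
  unfold spikeLoss
  split_ifs <;> simp [abs_of_nonneg hε]

theorem spikeLoss_self_le (hε : 0 ≤ ε) (z : α) : spikeLoss x ε x ≤ spikeLoss x ε z := by
  rw [spikeLoss_self]
  exact neg_le_of_abs_le (abs_spikeLoss x hε z).le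

end SpikeLoss

theorem bandit_regret_lower_bound_general (d T : ℕ) (hd : 1 ≤ d) (hT : 1 ≤ T)
    (C : ℝ) (hC : 0 < C)
    (K : Set (Fin d → ℝ))
    (hKball : ∀ z : Fin d → ℝ, (∑ i, z i ^ 2) ≤ 1 → z ∈ K)
    (p : ℕ → (ℕ → ℝ) → (Fin d → ℝ))
    (hp_dep : ∀ t v w, (∀ τ, 1 ≤ τ → τ < t → v τ = w τ) → p t v = p t w)
    (X : (ℕ → (Fin d → ℝ) → ℝ) → ℕ → (Fin d → ℝ))
    (hX : ∀ F t, X F t = p t fun τ => F τ (X F τ)) :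
    ∃ F : ℕ → (Fin d → ℝ) → ℝ,
      (∃ θ : ℕ → Fin d → ℝ, ∀ z : ℕ → Fin d → ℝ, (∀ t, z t ∈ K) →
        ∑ t ∈ Icc 1 T, |F t (z t) - θ t ⬝ᵥ z t| ≤ C) ∧
      (∃ f0 : (Fin d → ℝ) → ℝ, (∀ t, F t = f0) ∧
        ∃ θ0 : Fin d → ℝ, ∀ z ∈ K, |f0 z - θ0 ⬝ᵥ z| ≤ C / T) ∧
      ∃ xm ∈ K,
        (∀ z ∈ K, ∑ t ∈ Icc 1 T, F t xm ≤ ∑ t ∈ Icc 1 T, F t z) ∧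
        2 * C ≤ ∑ t ∈ Icc 1 T, F t (X F t) - ∑ t ∈ Icc 1 T, F t xm := by
  set ε := C / T
  have hε : 0 ≤ ε := by positivity
  have hTε : T * ε = C := mul_div_cancel₀ C (by positivity)
  obtain ⟨xm, hxmK, hxm_off⟩ := (Set.infinite_of_forall_sum_sq_le_one_mem hd hKball)
    |>.exists_notMem_finset ((Icc 1 T).image fun t => p t fun _ => ε)
  have hpath_ne : ∀ t ∈ Icc 1 T, p t (fun _ => ε) ≠ xm := fun t ht h =>
    hxm_off (h ▸ mem_image_of_mem _ ht)
  set F : ℕ → (Fin d → ℝ) → ℝ := fun _ => spikeLoss xm ε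
  have htraj : ∀ t ∈ Icc 1 T, F t (X F t) = ε := fun t ht => by
    rw [trajectory_eq_of_feedback_eq T p hp_dep X hX F _
      (fun τ hτ => spikeLoss_of_ne xm ε (hpath_ne τ hτ)) t (mem_Icc.mp ht).2]
    exact spikeLoss_of_ne xm ε (hpath_ne t ht)
  refine ⟨F, ⟨0, fun z _ => ?_⟩, ⟨spikeLoss xm ε, fun _ => rfl, 0, fun z _ => ?_⟩, xm, hxmK,
    fun z _ => sum_le_sum fun _ _ => spikeLoss_self_le xm hε z, ?_⟩
  · simp [F, abs_spikeLoss xm hε, hTε]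
  · simpa only [zero_dotProduct, sub_zero] using (abs_spikeLoss xm hε z).le
  · rw [sum_congr rfl htraj]
    simp only [F, spikeLoss_self, sum_const, Nat.card_Icc, add_tsub_cancel_right, nsmul_eq_mul,
      hTε]
    linarith

/-- **Regret lower bound `Ω(C)` (final Theorem, Section 6).**
Let `K ⊆ ℝ^d` (`d ≥ 1`) be convex and contain the unit Euclidean ball, `T ≥ 1` and
`C > 0`.  Consider any deterministic player given by maps `p t : ℝ^{t−1} → K`
(depending only on the previously observed loss values), with trajectory
`x_t = p t (f_1(x_1), …, f_{t−1}(x_{t−1}))`.  Then there exists a `C`-approximately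
linear sequence of losses `F_1, …, F_T` — in fact all equal to a single
`ε`-approximately linear function with `ε = C/T` — whose cumulative minimum over `K`
is attained and such that `Σ_t F_t(x_t) − min_{x∈K} Σ_t F_t(x) ≥ 2C`. -/
theorem bandit_regret_lower_bound (d T : ℕ) (hd : 1 ≤ d) (hT : 1 ≤ T)
    (C : ℝ) (hC : 0 < C)
    (K : Set (Fin d → ℝ)) (hKconv : Convex ℝ K)
    (hKball : ∀ z : Fin d → ℝ, (∑ i, z i ^ 2) ≤ 1 → z ∈ K)
    (p : ℕ → (ℕ → ℝ) → (Fin d → ℝ))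
    (hp_mem : ∀ t v, p t v ∈ K)
    (hp_dep : ∀ t v w, (∀ τ, 1 ≤ τ → τ < t → v τ = w τ) → p t v = p t w)
    (X : (ℕ → (Fin d → ℝ) → ℝ) → ℕ → (Fin d → ℝ))
    (hX : ∀ F t, X F t = p t fun τ => F τ (X F τ)) :
    ∃ F : ℕ → (Fin d → ℝ) → ℝ,
      (∃ θ : ℕ → Fin d → ℝ, ∀ z : ℕ → Fin d → ℝ, (∀ t, z t ∈ K) →
        ∑ t ∈ Icc 1 T, |F t (z t) - θ t ⬝ᵥ z t| ≤ C) ∧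
      (∃ f0 : (Fin d → ℝ) → ℝ, (∀ t, F t = f0) ∧
        ∃ θ0 : Fin d → ℝ, ∀ z ∈ K, |f0 z - θ0 ⬝ᵥ z| ≤ C / T) ∧
      ∃ xm ∈ K,
        (∀ z ∈ K, ∑ t ∈ Icc 1 T, F t xm ≤ ∑ t ∈ Icc 1 T, F t z) ∧
        2 * C ≤ ∑ t ∈ Icc 1 T, F t (X F t) - ∑ t ∈ Icc 1 T, F t xm :=
  bandit_regret_lower_bound_general d T hd hT C hC K hKball p hp_dep X hX
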